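/- Let f : (0,∞) → ℝ be differentiable with a finite limit f(∞) := lim_{r→∞} f(r), let A be the general spherically symmetric flat SO(3)-connection determined by f, and fix x ∈ ℝ³∖{0} with r = |x|. Let N be the 3×3 matrix with entries N_i{}^j := Σ_k (x^k/r) ε_{ki}{}^j, and for t > 0 define T(t) := exp((f(tr) − f(∞)) · N) (matrix exponential). Then T solves the parallel-transport equation along the ray t ↦ tx: dT/dt (t) = M(t) T(t) for all t > 0, where M(t)_i{}^j := Σ_{μ,k} x^μ A_μ{}^k(tx) ε_{ki}{}^j. -/

import Mathlib

attribute [local instance] Matrix.normedAddCommGroup Matrix.normedSpace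

/-- The totally antisymmetric Levi-Civita symbol on three indices, `eps 0 1 2 = 1`. -/
noncomputable def eps (i j k : Fin 3) : ℝ :=
  ((j : ℝ) - (i : ℝ)) * ((k : ℝ) - (i : ℝ)) * ((k : ℝ) - (j : ℝ)) / 2

/-- The radius `r = |x|` of a point `x ∈ ℝ³`. -/
noncomputable def rad (x : Fin 3 → ℝ) : ℝ := Real.sqrt (∑ i, x i ^ 2)

/-- The general spherically symmetric flat SO(3)-connection determined by `f`:
`A_μ{}^i = ε_{μij} x_j (cos f - 1)/r² + δ_μ^i sin f / r + x_μ x^i (r f' - sin f)/r³`. -/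
noncomputable def Aconn (f : ℝ → ℝ) (x : Fin 3 → ℝ) (μ i : Fin 3) : ℝ :=
  (∑ j, eps μ i j * x j) * (Real.cos (f (rad x)) - 1) / rad x ^ 2 +
  (if μ = i then (1 : ℝ) else 0) * Real.sin (f (rad x)) / rad x +
  x μ * x i * (rad x * deriv f (rad x) - Real.sin (f (rad x))) / rad x ^ 3

/-!
Along the ray `t ↦ t x` only the radial component of the connection matters, and contracting
`A(y)` with `y` kills the `ε`-term and leaves `y^μ A_μ{}^k(y) = y^k f'(|y|)`. Hence the transport
generator is `M(t) = |x| f'(t |x|) • N`, a scalar multiple of the fixed matrix `N`, and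
`T(t) = exp ((f(t |x|) - L) • N)` solves `T' = M T` by the chain rule for `s ↦ exp (s • N)`.
-/

-- The operator norm makes matrices a normed algebra; it induces the same topology as the ambient
-- entrywise norm, so the resulting derivative is the ambient one definitionally.
theorem Matrix.hasDerivAt_exp_smul_const' {m 𝕂 : Type*} [Fintype m] [DecidableEq m] [RCLike 𝕂]
    (A : Matrix m m 𝕂) (t : 𝕂) :
    HasDerivAt (fun u : 𝕂 => NormedSpace.exp (u • A)) (A * NormedSpace.exp (t • A)) t :=
  open scoped Norms.Operator in _root_.hasDerivAt_exp_smul_const' A t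

lemma rad_pos {x : Fin 3 → ℝ} (hx : x ≠ 0) : 0 < rad x := by
  obtain ⟨i, hi⟩ := Function.ne_iff.1 hx
  exact Real.sqrt_pos.2 <| Finset.sum_pos' (fun j _ => sq_nonneg _)
    ⟨i, Finset.mem_univ i, pow_two_pos_of_ne_zero hi⟩

lemma sq_rad (x : Fin 3 → ℝ) : rad x ^ 2 = x 0 ^ 2 + x 1 ^ 2 + x 2 ^ 2 := by
  rw [rad, Real.sq_sqrt (Finset.sum_nonneg fun i _ => sq_nonneg _), Fin.sum_univ_three]

lemma rad_smul (x : Fin 3 → ℝ) {t : ℝ} (ht : 0 ≤ t) : rad (t • x) = t * rad x := by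
  have h : ∑ i, (t • x) i ^ 2 = t ^ 2 * ∑ i, x i ^ 2 := by
    simp [Finset.mul_sum, mul_pow]
  rw [rad, rad, h, Real.sqrt_mul (sq_nonneg t), Real.sqrt_sq ht]

lemma sum_mul_Aconn_self (f : ℝ → ℝ) {y : Fin 3 → ℝ} (hy : y ≠ 0) (k : Fin 3) :
    ∑ μ, y μ * Aconn f y μ k = y k * deriv f (rad y) := by
  have hr := (rad_pos hy).ne'
  have hsq := sq_rad y
  simp only [Aconn, Fin.sum_univ_three]
  set d := deriv f (rad y)
  set s := Real.sin (f (rad y))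
  obtain rfl | rfl | rfl : k = 0 ∨ k = 1 ∨ k = 2 := by omega
  all_goals
    norm_num [eps, Fin.ext_iff]
    field_simp
  · linear_combination (y 0 * s - y 0 * rad y * d) * hsq
  · linear_combination (y 1 * s - y 1 * rad y * d) * hsq
  · linear_combination (y 2 * s - y 2 * rad y * d) * hsq

lemma sum_mul_Aconn_smul (f : ℝ → ℝ) {x : Fin 3 → ℝ} (hx : x ≠ 0) {t : ℝ} (ht : 0 < t)
    (k : Fin 3) : ∑ μ, x μ * Aconn f (t • x) μ k = x k * deriv f (t * rad x) := by
  have h := sum_mul_Aconn_self f (smul_ne_zero ht.ne' hx) k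
  simp only [rad_smul x ht.le, Pi.smul_apply, smul_eq_mul, mul_assoc, ← Finset.mul_sum] at h
  exact mul_left_cancel₀ ht.ne' h

theorem stmt16_general (f : ℝ → ℝ) (hf : ∀ r > 0, DifferentiableAt ℝ f r)
    (L : ℝ)
    (x : Fin 3 → ℝ) (hx : x ≠ 0)
    (N : Matrix (Fin 3) (Fin 3) ℝ)
    (hN : ∀ i j, N i j = ∑ k, x k / rad x * eps k i j)
    (M : ℝ → Matrix (Fin 3) (Fin 3) ℝ)
    (hM : ∀ t > 0, ∀ i j, M t i j = ∑ μ, ∑ k, x μ * Aconn f (t • x) μ k * eps k i j) :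
    ∀ t > 0,
      HasDerivAt (fun s : ℝ => NormedSpace.exp ((f (s * rad x) - L) • N))
        (M t * NormedSpace.exp ((f (t * rad x) - L) • N)) t := by
  intro t ht
  have hr := rad_pos hx
  have hM_eq : M t = (rad x * deriv f (t * rad x)) • N := by
    ext i j
    simp only [hM t ht i j, Matrix.smul_apply, hN i j, smul_eq_mul, Finset.mul_sum]
    rw [Finset.sum_comm]
    refine Finset.sum_congr rfl fun k _ => ?_
    rw [← Finset.sum_mul, sum_mul_Aconn_smul f hx ht k]
    field_simp
  have hg : HasDerivAt (fun s : ℝ => f (s * rad x) - L) (rad x * deriv f (t * rad x)) t := by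
    have := ((hf _ (mul_pos ht hr)).hasDerivAt.comp t ((hasDerivAt_id t).mul_const (rad x)))
    simpa [mul_comm] using this.sub_const L
  rw [hM_eq, Matrix.smul_mul]
  exact (N.hasDerivAt_exp_smul_const' _).scomp t hg

/-- with `N_i{}^j = (x^k/r) ε_{ki}{}^j` and `f(∞) = L`, the matrix
`T(t) = exp((f(tr) - f(∞)) N)` solves the parallel-transport equation along the ray
`t ↦ tx`: `dT/dt = M(t) T(t)`, where `M(t)_i{}^j = x^μ A_μ{}^k(tx) ε_{ki}{}^j`. -/
theorem stmt16 (f : ℝ → ℝ) (hf : ∀ r > 0, DifferentiableAt ℝ f r)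
    (L : ℝ) (hL : Filter.Tendsto f Filter.atTop (nhds L))
    (x : Fin 3 → ℝ) (hx : x ≠ 0)
    (N : Matrix (Fin 3) (Fin 3) ℝ)
    (hN : ∀ i j, N i j = ∑ k, x k / rad x * eps k i j)
    (M : ℝ → Matrix (Fin 3) (Fin 3) ℝ)
    (hM : ∀ t > 0, ∀ i j, M t i j = ∑ μ, ∑ k, x μ * Aconn f (t • x) μ k * eps k i j) :
    ∀ t > 0,
      HasDerivAt (fun s : ℝ => NormedSpace.exp ((f (s * rad x) - L) • N))
        (M t * NormedSpace.exp ((f (t * rad x) - L) • N)) t :=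
  stmt16_general f hf L x hx N hN M hM
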